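/- arXiv:1306.0108 — 3 statements merged into one kernel-verified Lean document; each statement's English description precedes it below -/
import Mathlib

section
/- Every uniquely P-clean ring is uniquely clean: if R is uniquely P-clean, then every element of R has a unique representation as the sum of an idempotent and a unit. -/
/-!
A strongly nilpotent element `a` stays strongly nilpotent after left multiplication, so
`u - a = u (1 - u⁻¹ a)` is a unit whenever `u` is. Hence if `u` is a unit and `e` the idempotent
with `u - e ∈ P(R)`, then `e` is an idempotent unit, i.e. `e = 1`: every unit lies in `1 + P(R)`.
Now `x = e + u` with `u` a unit forces `(x - 1) - e = u - 1 ∈ P(R)`, so `e` is the unique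
idempotent attached to `x - 1`; conversely for that idempotent `x - e ∈ 1 + P(R)` is a unit.
-/

/-- An element `a` of a ring is strongly nilpotent if every sequence
`a = a₀, a₁, a₂, …` with `a_{i+1} ∈ a_i R a_i` is eventually zero. -/
def IsStronglyNilpotent {R : Type*} [Ring R] (a : R) : Prop :=
  ∀ f : ℕ → R, f 0 = a → (∀ i, ∃ r : R, f (i + 1) = f i * r * f i) → ∃ n, f n = 0

/-- The prime radical `P(R)`: the set of strongly nilpotent elements
(equivalently, the intersection of all prime ideals). -/
def primeRadical (R : Type*) [Ring R] : Set R :=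
  {a | IsStronglyNilpotent a}

/-- A ring is uniquely P-clean if every element `x` admits a unique idempotent
`e` with `x - e ∈ P(R)`. -/
def UniquelyPCleanRing (R : Type*) [Ring R] : Prop :=
  ∀ x : R, ∃! e : R, IsIdempotentElem e ∧ x - e ∈ primeRadical R

/-- A ring is uniquely clean if every element can be written in exactly one way
as the sum of an idempotent and a unit. -/
def UniquelyCleanRing (R : Type*) [Ring R] : Prop :=
  ∀ x : R, ∃! p : R × R, IsIdempotentElem p.1 ∧ IsUnit p.2 ∧ x = p.1 + p.2

namespace IsStronglyNilpotent

variable {R : Type*} [Ring R] {a : R}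

theorem isNilpotent (ha : IsStronglyNilpotent a) : IsNilpotent a := by
  obtain ⟨n, hn⟩ := ha (fun n => a ^ 2 ^ n) (pow_one a) fun i =>
    ⟨1, by rw [mul_one, ← pow_add, pow_succ, mul_two]⟩
  exact ⟨2 ^ n, hn⟩

theorem mul_left (ha : IsStronglyNilpotent a) (r : R) : IsStronglyNilpotent (r * a) := by
  intro f hf0 hf
  choose s hs using hf
  -- `f` is `r` times a sequence `g` starting at `a`, with `g (i + 1) ∈ g i R g i`.
  let g : ℕ → R := fun n => Nat.rec a (fun i gi => gi * (s i * r) * gi) n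
  have hfg : ∀ n, f n = r * g n := by
    intro n
    induction n with
    | zero => exact hf0
    | succ i ih =>
      change f (i + 1) = r * (g i * (s i * r) * g i)
      rw [hs i, ih]
      noncomm_ring
  obtain ⟨n, hn⟩ := ha g rfl fun i => ⟨s i * r, rfl⟩
  exact ⟨n, by rw [hfg, hn, mul_zero]⟩

theorem isUnit_sub {u : R} (hu : IsUnit u) (ha : IsStronglyNilpotent a) : IsUnit (u - a) := by
  obtain ⟨v, rfl⟩ := hu
  have hfactor : (v : R) - a = v * (1 - ↑v⁻¹ * a) := by
    rw [mul_sub, mul_one, ← mul_assoc, Units.mul_inv, one_mul]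
  exact hfactor ▸ v.isUnit.mul (ha.mul_left _).isNilpotent.isUnit_one_sub

end IsStronglyNilpotent

theorem UniquelyPCleanRing.sub_one_mem_primeRadical {R : Type*} [Ring R]
    (h : UniquelyPCleanRing R) {u : R} (hu : IsUnit u) : u - 1 ∈ primeRadical R := by
  obtain ⟨e, ⟨he, hue⟩, -⟩ := h u
  have he_unit : IsUnit e := by simpa using IsStronglyNilpotent.isUnit_sub hu hue
  rwa [(IsIdempotentElem.iff_eq_one_of_isUnit he_unit).mp he] at hue

/-- **Corollary 2.11.** Every uniquely P-clean ring is uniquely clean. -/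
theorem uniquelyCleanRing_of_uniquelyPCleanRing (R : Type*) [Ring R]
    (h : UniquelyPCleanRing R) : UniquelyCleanRing R := by
  intro x
  obtain ⟨e, ⟨he, hxe⟩, huniq⟩ := h (x - 1)
  have hunit : IsUnit (x - e) := by
    rw [show x - e = 1 + (x - 1 - e) by abel]
    exact hxe.isNilpotent.isUnit_one_add
  refine ⟨(e, x - e), ⟨he, hunit, (add_sub_cancel e x).symm⟩, ?_⟩
  rintro ⟨f, v⟩ ⟨hf, hv, rfl⟩
  have hfe : f = e := huniq f ⟨hf, by
    rw [show f + v - 1 - f = v - 1 by abel]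
    exact h.sub_one_mem_primeRadical hv⟩
  simp [hfe]
end

section
/- A ring R is strongly P-clean if and only if for every idempotent e ∈ R the corner ring eRe is strongly P-clean. -/
/-- An element is strongly P-clean if it is the sum of an idempotent and an
element of the prime radical that commute. -/
def IsStronglyPClean {R : Type*} [Ring R] (x : R) : Prop :=
  ∃ e w : R, IsIdempotentElem e ∧ w ∈ primeRadical R ∧ x = e + w ∧ e * w = w * e

/-- A ring is strongly P-clean if each of its elements is strongly P-clean. -/
def StronglyPCleanRing (R : Type*) [Ring R] : Prop :=
  ∀ x : R, IsStronglyPClean x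

/-- The corner set `fRf = {x | fx = x and xf = x}` as a non-unital subring. -/
def cornerSubring {R : Type*} [Ring R] (f : R) : NonUnitalSubring R where
  carrier := {x | f * x = x ∧ x * f = x}
  add_mem' := by
    rintro a b ⟨ha1, ha2⟩ ⟨hb1, hb2⟩
    exact ⟨by rw [mul_add, ha1, hb1], by rw [add_mul, ha2, hb2]⟩
  zero_mem' := by simp
  neg_mem' := by
    rintro a ⟨ha1, ha2⟩
    exact ⟨by rw [mul_neg, ha1], by rw [neg_mul, ha2]⟩
  mul_mem' := by
    rintro a b ⟨ha1, ha2⟩ ⟨hb1, hb2⟩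
    exact ⟨by rw [← mul_assoc, ha1], by rw [mul_assoc, hb2]⟩

/-- The corner ring `fRf` of an idempotent `f`: a ring with identity `f`. -/
def cornerRing {R : Type*} [Ring R] (f : R) (hf : IsIdempotentElem f) :
    Ring (cornerSubring f) :=
  { (inferInstance : NonUnitalRing (cornerSubring f)) with
    one := ⟨f, hf, hf⟩
    one_mul := fun x => Subtype.ext x.2.1
    mul_one := fun x => Subtype.ext x.2.2 }

/-!
If `x = g + w` with `g` idempotent and `w` nilpotent commuting with `g`, then `g` is a two-sided
multiple of `x`, so `g`, and with it `w`, lies in every corner `eRe` that contains `x`. Strong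
nilpotence is the same in `eRe` as in `R`, because a multiplier `r` in `aᵢ₊₁ = aᵢ r aᵢ` may be
replaced by `ere`. So `x ∈ eRe` is strongly P-clean in `eRe` iff it is in `R`, and `e = 1` gives
the converse.
-/

open Finset

theorem IsStronglyNilpotent.isNilpotent_s12 {R : Type*} [Ring R] {a : R}
    (h : IsStronglyNilpotent a) : IsNilpotent a := by
  obtain ⟨n, hn⟩ := h (fun i => a ^ 2 ^ i) (by simp) fun i =>
    ⟨1, by rw [mul_one, ← pow_add, ← two_mul, ← pow_succ']⟩
  exact ⟨2 ^ n, hn⟩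

/-- With `w ^ n = 0`, the idempotent `g = g ^ (n + 1) - (-w) ^ (n + 1)` is a two-sided multiple
of `g - (-w) = g + w` by the commuting geometric sum. -/
theorem IsIdempotentElem.exists_eq_mul_and_eq_mul_of_isNilpotent {R : Type*} [Ring R] {g w : R}
    (hg : IsIdempotentElem g) (hw : IsNilpotent w) (hgw : Commute g w) :
    ∃ s, g = (g + w) * s ∧ g = s * (g + w) := by
  obtain ⟨n, hn⟩ := hw
  have hg_eq : g = g ^ (n + 1) - (-w) ^ (n + 1) := by
    rw [hg.pow_succ_eq, neg_pow, pow_succ w, hn, zero_mul, mul_zero, sub_zero]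
  have hsub : g - -w = g + w := sub_neg_eq_add g w
  refine ⟨∑ i ∈ range (n + 1), g ^ i * (-w) ^ (n + 1 - 1 - i), ?_, ?_⟩
  · rw [← hsub, hgw.neg_right.mul_geom_sum₂, ← hg_eq]
  · rw [← hsub, hgw.neg_right.geom_sum₂_mul, ← hg_eq]

section Corner

variable {R : Type*} [Ring R] {e : R}

theorem add_mem_cornerSubring_iff_of_isNilpotent {g w : R} (hg : IsIdempotentElem g)
    (hw : IsNilpotent w) (hgw : Commute g w) :
    g + w ∈ cornerSubring e ↔ g ∈ cornerSubring e ∧ w ∈ cornerSubring e := by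
  refine ⟨fun hx => ?_, fun ⟨hg', hw'⟩ => add_mem hg' hw'⟩
  obtain ⟨s, hgs, hsg⟩ := hg.exists_eq_mul_and_eq_mul_of_isNilpotent hw hgw
  have hg' : g ∈ cornerSubring e :=
    ⟨by rw [hgs, ← mul_assoc, hx.1], by rw [hsg, mul_assoc, hx.2]⟩
  exact ⟨hg', by simpa using sub_mem hx hg'⟩

theorem mul_mul_self_mem_cornerSubring {a : R} (ha : a ∈ cornerSubring e) (r : R) :
    a * r * a ∈ cornerSubring e :=
  ⟨by rw [← mul_assoc, ← mul_assoc, ha.1], by rw [mul_assoc, ha.2]⟩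

theorem isStronglyNilpotent_cornerRing_iff (he : IsIdempotentElem e) (a : cornerSubring e) :
    (letI : Ring (cornerSubring e) := cornerRing e he
    IsStronglyNilpotent a) ↔ IsStronglyNilpotent (a : R) := by
  let : Ring (cornerSubring e) := cornerRing e he
  constructor
  · intro ha f hf0 hf
    choose r hr using hf
    have hmem : ∀ i, f i ∈ cornerSubring e := by
      intro i
      induction i with
      | zero => exact hf0 ▸ a.2
      | succ i ih => exact hr i ▸ mul_mul_self_mem_cornerSubring ih (r i)
    obtain ⟨n, hn⟩ := ha (fun i => ⟨f i, hmem i⟩) (Subtype.ext hf0) fun i =>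
      ⟨⟨e * r i * e, mul_mul_self_mem_cornerSubring ⟨he, he⟩ (r i)⟩, Subtype.ext <| by
        change f (i + 1) = f i * (e * r i * e) * f i
        rw [hr i, ← mul_assoc, ← mul_assoc, (hmem i).2, mul_assoc _ e, (hmem i).1]⟩
    exact ⟨n, congrArg Subtype.val hn⟩
  · intro ha F hF0 hF
    choose r hr using hF
    obtain ⟨n, hn⟩ := ha (fun i => F i) (congrArg Subtype.val hF0) fun i =>
      ⟨r i, congrArg Subtype.val (hr i)⟩
    exact ⟨n, Subtype.ext hn⟩

theorem isStronglyPClean_cornerRing_iff (he : IsIdempotentElem e) (x : cornerSubring e) :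
    (letI : Ring (cornerSubring e) := cornerRing e he
    IsStronglyPClean x) ↔ IsStronglyPClean (x : R) := by
  let : Ring (cornerSubring e) := cornerRing e he
  constructor
  · rintro ⟨g, w, hg, hw, rfl, hgw⟩
    exact ⟨g, w, congrArg Subtype.val hg, (isStronglyNilpotent_cornerRing_iff he w).1 hw, rfl,
      congrArg Subtype.val hgw⟩
  · rintro ⟨g, w, hg, hw, hx, hgw⟩
    obtain ⟨hg', hw'⟩ := (add_mem_cornerSubring_iff_of_isNilpotent hg hw.isNilpotent_s12 hgw).1
      (hx ▸ x.2)
    exact ⟨⟨g, hg'⟩, ⟨w, hw'⟩, Subtype.ext hg,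
      (isStronglyNilpotent_cornerRing_iff he ⟨w, hw'⟩).2 hw, Subtype.ext hx, Subtype.ext hgw⟩

end Corner

/-- **Corollary 3.3.** A ring `R` is strongly P-clean iff for every idempotent
`e ∈ R` the corner ring `eRe` is strongly P-clean. -/
theorem stronglyPCleanRing_iff_corners {R : Type*} [Ring R] :
    StronglyPCleanRing R ↔
      ∀ e : R, ∀ he : IsIdempotentElem e,
        letI : Ring (cornerSubring e) := cornerRing e he
        StronglyPCleanRing (cornerSubring e) := by
  refine ⟨fun hR e he x => (isStronglyPClean_cornerRing_iff he x).2 (hR x), fun h x => ?_⟩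
  exact (isStronglyPClean_cornerRing_iff .one ⟨x, one_mul x, mul_one x⟩).1
    (h 1 .one ⟨x, one_mul x, mul_one x⟩)
end

section
/- Let R be a local ring. Then a matrix A ∈ M₂(R) is strongly P-clean if and only if A ∈ M₂(P(R)), or I₂ − A ∈ M₂(P(R)), or A is similar (conjugate by an invertible matrix) to a diagonal matrix diag(λ, μ) with λ ∈ P(R) and μ ∈ 1 + P(R). -/
/-!
A sequence `a = a₀, a₁, …` with `aᵢ₊₁ ∈ aᵢ R aᵢ` that never reaches `0` is avoided by a two-sided
ideal maximal among those avoiding it, and such an ideal is prime; hence the strongly nilpotent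
elements are exactly those lying in every prime ideal. So `P(R)` is a two-sided ideal, and a
sequence argument with matrix units gives `P(Mₙ(R)) = Mₙ(P(R))`.

Over a local ring an idempotent `E ∈ M₂(R)` is `0`, `1` or conjugate to `diag(0, 1)`: one of
`E₀₀`, `1 - E₀₀` is a unit, and if `E₀₀` is a unit, conjugating by the invertible matrix whose first
column is the `E`-fixed column `(E₀₀, E₁₀)` turns `E` into an idempotent `!![1, x; 0, y]`, where
`y` is an idempotent of `R`, hence `0` or `1`. Once `E = diag(0, 1)`, the element of `P(M₂(R))`
commuting with it is diagonal.
-/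

namespace TwoSidedIdeal

variable {R : Type*} [Ring R]

/-- Primeness in the noncommutative sense; `Ideal.IsPrime` is complete primeness. -/
def IsPrime (P : TwoSidedIdeal R) : Prop :=
  P ≠ ⊤ ∧ ∀ x y : R, (∀ r, x * r * y ∈ P) → x ∈ P ∨ y ∈ P

theorem mul_mul_mem_of_mem_span_singleton {P : TwoSidedIdeal R} {x y : R}
    (h : ∀ r, x * r * y ∈ P) {u v : R} (hu : u ∈ span {x}) (hv : v ∈ span {y}) (r : R) :
    u * r * v ∈ P := by
  induction hu using span_induction generalizing r with
  | mem _ hx =>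
    rw [Set.mem_singleton_iff.1 hx]
    induction hv using span_induction generalizing r with
    | mem _ hy => rw [Set.mem_singleton_iff.1 hy]; exact h r
    | zero => simp
    | add _ _ _ _ h₁ h₂ => simpa [mul_add] using P.add_mem (h₁ r) (h₂ r)
    | neg _ _ h₁ => simpa using P.neg_mem (h₁ r)
    | left_absorb a _ _ h₁ => simpa [mul_assoc] using h₁ (r * a)
    | right_absorb b _ _ h₁ => simpa [mul_assoc] using P.mul_mem_right _ b (h₁ r)
  | zero => simp
  | add _ _ _ _ h₁ h₂ => simpa [add_mul] using P.add_mem (h₁ r) (h₂ r)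
  | neg _ _ h₁ => simpa using P.neg_mem (h₁ r)
  | left_absorb a _ _ h₁ => simpa [mul_assoc] using P.mul_mem_left a _ (h₁ r)
  | right_absorb b _ _ h₁ => simpa [mul_assoc] using h₁ (b * r)

theorem mem_of_le_of_mem {f : ℕ → R} (hf : ∀ i, ∃ r, f (i + 1) = f i * r * f i)
    {I : TwoSidedIdeal R} {m k : ℕ} (hmk : m ≤ k) (hm : f m ∈ I) : f k ∈ I := by
  induction k, hmk using Nat.le_induction with
  | base => exact hm
  | succ k _ ih =>
    obtain ⟨r, hr⟩ := hf k
    exact hr ▸ I.mul_mem_right _ _ (I.mul_mem_right _ _ ih)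

theorem isPrime_of_maximal {f : ℕ → R} (hf : ∀ i, ∃ r, f (i + 1) = f i * r * f i)
    {P : TwoSidedIdeal R} (hP : Maximal (fun I => ∀ n, f n ∉ I) P) : P.IsPrime := by
  refine ⟨fun htop => hP.1 0 (htop ▸ mem_top R), fun x y hxy => ?_⟩
  by_contra! hxy'
  have eventually_mem : ∀ z ∉ P, ∃ m, ∀ k, m ≤ k → f k ∈ P ⊔ span {z} := by
    intro z hz
    have hlt : P < P ⊔ span {z} :=
      lt_of_le_of_ne le_sup_left fun h => hz (h ▸ mem_sup_right (subset_span rfl))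
    obtain ⟨m, hm⟩ : ∃ m, f m ∈ P ⊔ span {z} := by
      by_contra! h
      exact hP.not_gt h hlt
    exact ⟨m, fun k hk => mem_of_le_of_mem hf hk hm⟩
  obtain ⟨m, hm⟩ := eventually_mem x hxy'.1
  obtain ⟨n, hn⟩ := eventually_mem y hxy'.2
  obtain ⟨p, hp, u, hu, hpu⟩ := mem_sup.1 (hm (max m n) (le_max_left m n))
  obtain ⟨q, hq, v, hv, hqv⟩ := mem_sup.1 (hn (max m n) (le_max_right m n))
  obtain ⟨r, hr⟩ := hf (max m n)
  refine hP.1 (max m n + 1) ?_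
  have hsplit : f (max m n + 1) = p * r * (q + v) + u * r * q + u * r * v :=
    calc f (max m n + 1) = (p + u) * r * (q + v) := by rw [hpu, hqv, hr]
      _ = _ := by noncomm_ring
  rw [hsplit]
  exact P.add_mem (P.add_mem (P.mul_mem_right _ _ (P.mul_mem_right _ _ hp))
    (P.mul_mem_left _ _ hq)) (mul_mul_mem_of_mem_span_singleton hxy hu hv r)

theorem exists_maximal_forall_notMem {f : ℕ → R} (hf : ∀ n, f n ≠ 0) :
    ∃ P : TwoSidedIdeal R, Maximal (fun I => ∀ n, f n ∉ I) P := by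
  refine zorn_le₀ _ fun c hc hchain => ?_
  rcases c.eq_empty_or_nonempty with rfl | ⟨I₀, hI₀⟩
  · exact ⟨⊥, fun n h => hf n ((mem_bot R).1 h), by simp⟩
  let U : TwoSidedIdeal R := .mk' {x | ∃ I ∈ c, x ∈ I} ⟨I₀, hI₀, I₀.zero_mem⟩
    (fun ⟨I, hI, hx⟩ ⟨J, hJ, hy⟩ => (hchain.total hI hJ).elim
      (fun h => ⟨J, hJ, J.add_mem (h hx) hy⟩) (fun h => ⟨I, hI, I.add_mem hx (h hy)⟩))
    (fun ⟨I, hI, hx⟩ => ⟨I, hI, I.neg_mem hx⟩)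
    (fun ⟨I, hI, hy⟩ => ⟨I, hI, I.mul_mem_left _ _ hy⟩)
    (fun ⟨I, hI, hx⟩ => ⟨I, hI, I.mul_mem_right _ _ hx⟩)
  refine ⟨U, fun n hn => ?_, fun I hI x hx => (mem_mk' ..).2 ⟨I, hI, hx⟩⟩
  obtain ⟨I, hI, h⟩ := (mem_mk' ..).1 hn
  exact hc hI n h

end TwoSidedIdeal

section PrimeRadical

variable {R : Type*} [Ring R]

theorem IsStronglyNilpotent.mem_of_isPrime {a : R} (ha : IsStronglyNilpotent a)
    {P : TwoSidedIdeal R} (hP : P.IsPrime) : a ∈ P := by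
  by_contra h
  have step : ∀ x : {x : R // x ∉ P}, ∃ r, x.1 * r * x.1 ∉ P := fun x => by
    by_contra! hx
    exact (hP.2 x x hx).elim x.2 x.2
  choose r hr using step
  let g : {x : R // x ∉ P} → {x : R // x ∉ P} := fun x => ⟨x.1 * r x * x.1, hr x⟩
  obtain ⟨n, hn⟩ := ha (fun n => (g^[n] ⟨a, h⟩).1) rfl
    fun i => ⟨r _, by rw [Function.iterate_succ_apply']⟩
  exact (g^[n] ⟨a, h⟩).2 (hn ▸ P.zero_mem)

theorem isStronglyNilpotent_iff_forall_isPrime {a : R} :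
    IsStronglyNilpotent a ↔ ∀ P : TwoSidedIdeal R, P.IsPrime → a ∈ P := by
  refine ⟨fun ha P hP => ha.mem_of_isPrime hP, fun ha f hf0 hf => ?_⟩
  by_contra! hne
  obtain ⟨P, hP⟩ := TwoSidedIdeal.exists_maximal_forall_notMem hne
  exact hP.1 0 (hf0 ▸ ha P (TwoSidedIdeal.isPrime_of_maximal hf hP))

variable (R) in
def primeRadicalIdeal : TwoSidedIdeal R := sInf {P | P.IsPrime}

@[simp]
theorem mem_primeRadicalIdeal {a : R} : a ∈ primeRadicalIdeal R ↔ a ∈ primeRadical R := by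
  simp [primeRadicalIdeal, TwoSidedIdeal.mem_sInf, primeRadical,
    isStronglyNilpotent_iff_forall_isPrime]

theorem neg_mem_primeRadical {a : R} (ha : a ∈ primeRadical R) : -a ∈ primeRadical R :=
  mem_primeRadicalIdeal.1 (neg_mem (mem_primeRadicalIdeal.2 ha))

end PrimeRadical

namespace Matrix

variable {R n : Type*} [Ring R] [Fintype n] [DecidableEq n]

theorem mul_single_mul_apply (A B : Matrix n n R) (i j : n) (c : R) :
    (A * single j i c * B) i j = A i j * c * B i j := by
  simp [mul_apply, single, ite_and, mul_assoc]

theorem isStronglyNilpotent_apply {A : Matrix n n R} (hA : IsStronglyNilpotent A) (i j : n) :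
    IsStronglyNilpotent (A i j) := by
  intro f hf0 hf
  choose r hr using hf
  let G : ℕ → Matrix n n R := fun k => Nat.rec A (fun k G => G * single j i (r k) * G) k
  have hG : ∀ k, G k i j = f k := fun k => by
    induction k with
    | zero => exact hf0.symm
    | succ k ih => rw [hr, ← ih, ← mul_single_mul_apply]
  obtain ⟨k, hk⟩ := hA G rfl fun k => ⟨_, rfl⟩
  exact ⟨k, by rw [← hG, hk, zero_apply]⟩

theorem isStronglyNilpotent_single {a : R} (ha : IsStronglyNilpotent a) (i j : n) :
    IsStronglyNilpotent (single i j a) := by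
  intro F hF0 hF
  choose B hB using hF
  have hF_single : ∀ k, F k = single i j (F k i j) := fun k => by
    induction k with
    | zero => rw [hF0, single_apply_same]
    | succ k ih => rw [hB, ih, single_mul_mul_single]; simp
  obtain ⟨k, hk⟩ := ha (fun k => F k i j) (by simp [hF0])
    fun k => ⟨B k j i, by rw [hB, hF_single k, single_mul_mul_single]; simp⟩
  exact ⟨k, by rw [hF_single, hk, single_zero]⟩

theorem mem_primeRadical_iff {A : Matrix n n R} :
    A ∈ primeRadical (Matrix n n R) ↔ ∀ i j, A i j ∈ primeRadical R := by
  refine ⟨isStronglyNilpotent_apply, fun h => ?_⟩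
  rw [← mem_primeRadicalIdeal, matrix_eq_sum_single A]
  exact sum_mem fun i _ => sum_mem fun j _ =>
    mem_primeRadicalIdeal.2 (isStronglyNilpotent_single (h i j) i j)

end Matrix

section Conjugation

variable {R S : Type*} [Ring R] [Ring S]

theorem IsStronglyNilpotent.map {a : R} (ha : IsStronglyNilpotent a) (f : R ≃+* S) :
    IsStronglyNilpotent (f a) := by
  intro g hg0 hg
  choose s hs using hg
  obtain ⟨n, hn⟩ := ha (fun i => f.symm (g i)) (by simp [hg0])
    fun i => ⟨f.symm (s i), by simp [hs]⟩
  exact ⟨n, by simpa using hn⟩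

theorem IsStronglyPClean.map {x : R} (hx : IsStronglyPClean x) (f : R ≃+* S) :
    IsStronglyPClean (f x) := by
  obtain ⟨e, w, he, hw, rfl, hew⟩ := hx
  exact ⟨f e, f w, he.map f, hw.map f, map_add f e w, by rw [← map_mul, hew, map_mul]⟩

def Units.conjRingEquiv (c : Rˣ) : R ≃+* R :=
  MulSemiringAction.toRingEquiv _ R (ConjAct.toConjAct c)

@[simp]
theorem Units.conjRingEquiv_apply (c : Rˣ) (x : R) : c.conjRingEquiv x = c * x * ↑c⁻¹ :=
  ConjAct.units_smul_def _ x

theorem IsConj.exists_conjRingEquiv_eq {x y : R} (h : IsConj x y) :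
    ∃ c : Rˣ, c.conjRingEquiv x = y := by
  obtain ⟨c, hc⟩ := h
  exact ⟨c, by simp [hc.eq, mul_assoc]⟩

theorem IsConj.one_sub {a b : R} (h : IsConj a b) :
    IsConj (1 - a) (1 - b) := by
  obtain ⟨c, hc⟩ := h
  exact ⟨c, by rw [SemiconjBy, mul_sub, sub_mul, hc.eq, mul_one, one_mul]⟩

end Conjugation

theorem IsConj.isIdempotentElem {M : Type*} [Monoid M] {a b : M} (h : IsConj a b)
    (ha : IsIdempotentElem a) : IsIdempotentElem b := by
  obtain ⟨c, hc⟩ := h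
  have hsq := hc.mul_right hc
  rw [ha.eq] at hsq
  exact (Units.mul_left_inj c).1 (hsq.eq.symm.trans hc.eq)

theorem IsIdempotentElem.eq_zero_or_one_of_isLocalRing {R : Type*} [Ring R] [IsLocalRing R]
    {e : R} (he : IsIdempotentElem e) : e = 0 ∨ e = 1 := by
  rcases IsLocalRing.isUnit_or_isUnit_of_add_one (add_sub_cancel e 1) with h | h
  · exact .inr ((IsIdempotentElem.iff_eq_one_of_isUnit h).1 he)
  · exact .inl (sub_eq_self.1 ((IsIdempotentElem.iff_eq_one_of_isUnit h).1 he.one_sub))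

namespace Matrix

variable {R : Type*} [Ring R]

theorem eq_one_or_isConj_of_isIdempotentElem_upper [IsLocalRing R] {x y : R}
    (hT : IsIdempotentElem !![1, x; 0, y]) :
    !![1, x; 0, y] = 1 ∨ IsConj !![1, x; 0, y] !![1, 0; 0, 0] := by
  obtain ⟨hxy, hy⟩ : x * y = 0 ∧ y * y = y := by simpa using hT.eq
  rcases IsIdempotentElem.eq_zero_or_one_of_isLocalRing hy with rfl | rfl
  · right
    refine ⟨⟨!![1, x; 0, 1], !![1, -x; 0, 1], ?_, ?_⟩, ?_⟩ <;>
      simp [SemiconjBy, one_fin_two]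
  · left
    simp [one_fin_two, by simpa using hxy]

theorem eq_one_or_isConj_of_isIdempotentElem_of_isUnit [IsLocalRing R]
    {E : Matrix (Fin 2) (Fin 2) R} (hE : IsIdempotentElem E) (ha : IsUnit (E 0 0)) :
    E = 1 ∨ IsConj E !![1, 0; 0, 0] := by
  obtain ⟨a, b, c, d, rfl⟩ : ∃ a b c d : R, E = !![a, b; c, d] :=
    ⟨_, _, _, _, eta_fin_two E⟩
  obtain ⟨u, rfl⟩ : ∃ u : Rˣ, ↑u = a := ha
  have h00 : ↑u * ↑u + b * c = ↑u := by simpa using congrFun (congrFun hE.eq 0) 0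
  have h10 : c * ↑u + d * c = c := by simpa using congrFun (congrFun hE.eq 1) 0
  have hconj : IsConj !![1, ↑u⁻¹ * b; 0, d - c * ↑u⁻¹ * b] !![↑u, b; c, d] := by
    refine ⟨⟨!![↑u, 0; c, 1], !![↑u⁻¹, 0; -(c * ↑u⁻¹), 1], ?_, ?_⟩, ?_⟩
    · simp [one_fin_two]
    · simp [one_fin_two]
    · simp [SemiconjBy, h00, h10, ← mul_assoc]
  rcases eq_one_or_isConj_of_isIdempotentElem_upper (hconj.symm.isIdempotentElem hE) with
    h1 | h1
  · rw [h1] at hconj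
    exact .inl (isConj_one_right.1 hconj)
  · exact .inr (hconj.symm.trans h1)

theorem eq_zero_or_eq_one_or_isConj_of_isIdempotentElem [IsLocalRing R]
    {E : Matrix (Fin 2) (Fin 2) R} (hE : IsIdempotentElem E) :
    E = 0 ∨ E = 1 ∨ IsConj E !![0, 0; 0, 1] := by
  rcases IsLocalRing.isUnit_or_isUnit_of_add_one (add_sub_cancel (E 0 0) 1) with h | h
  · rcases eq_one_or_isConj_of_isIdempotentElem_of_isUnit hE h with h1 | h1
    · exact .inr (.inl h1)
    · refine .inr (.inr (h1.trans ⟨⟨!![0, 1; 1, 0], !![0, 1; 1, 0], ?_, ?_⟩, ?_⟩)) <;>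
        simp [SemiconjBy, one_fin_two]
  · have hF : (1 - E) 0 0 = 1 - E 0 0 := by simp
    rcases eq_one_or_isConj_of_isIdempotentElem_of_isUnit hE.one_sub (hF ▸ h) with h1 | h1
    · exact .inl (sub_eq_self.1 h1)
    · have hD : (1 - !![1, 0; 0, 0] : Matrix (Fin 2) (Fin 2) R) = !![0, 0; 0, 1] := by
        ext i j
        fin_cases i <;> fin_cases j <;> simp
      have := h1.one_sub
      rw [sub_sub_cancel, hD] at this
      exact .inr (.inr this)

theorem eq_diag_of_commute {X : Matrix (Fin 2) (Fin 2) R}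
    (hX : !![0, 0; 0, 1] * X = X * !![0, 0; 0, 1]) : X = !![X 0 0, 0; 0, X 1 1] := by
  have h01 : X 0 1 = 0 := by simpa [mul_apply] using (congrFun (congrFun hX 0) 1).symm
  have h10 : X 1 0 = 0 := by simpa [mul_apply] using congrFun (congrFun hX 1) 0
  ext i j
  fin_cases i <;> fin_cases j <;> simp [h01, h10]

theorem exists_conj_add_eq_diag {E W : Matrix (Fin 2) (Fin 2) R} (hE : IsConj E !![0, 0; 0, 1])
    (hW : W ∈ primeRadical _) (hEW : E * W = W * E) :
    ∃ (lam mu : R) (U : (Matrix (Fin 2) (Fin 2) R)ˣ),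
      lam ∈ primeRadical R ∧ (∃ w ∈ primeRadical R, mu = 1 + w) ∧
        (U⁻¹).val * (E + W) * U.val = !![lam, 0; 0, mu] := by
  obtain ⟨c, hc⟩ := hE.exists_conjRingEquiv_eq
  set X := c.conjRingEquiv W
  have hX : X ∈ primeRadical _ := hW.map c.conjRingEquiv
  have hdiag := eq_diag_of_commute (X := X) (by rw [← hc, ← map_mul, hEW, map_mul])
  refine ⟨X 0 0, 1 + X 1 1, c⁻¹, isStronglyNilpotent_apply hX 0 0,
    ⟨X 1 1, isStronglyNilpotent_apply hX 1 1, rfl⟩, ?_⟩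
  calc ↑c⁻¹⁻¹ * (E + W) * ↑c⁻¹ = c.conjRingEquiv (E + W) := by simp
    _ = !![0, 0; 0, 1] + !![X 0 0, 0; 0, X 1 1] := by rw [map_add, hc, ← hdiag]
    _ = !![X 0 0, 0; 0, 1 + X 1 1] := by simp

theorem isStronglyPClean_diag {lam w : R} (hlam : lam ∈ primeRadical R)
    (hw : w ∈ primeRadical R) : IsStronglyPClean !![lam, 0; 0, 1 + w] := by
  have h0 : (0 : R) ∈ primeRadical R := mem_primeRadicalIdeal.1 (zero_mem _)
  refine ⟨!![0, 0; 0, 1], !![lam, 0; 0, w], ?_, ?_, ?_, ?_⟩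
  · rw [IsIdempotentElem, mul_fin_two]
    simp
  · rw [mem_primeRadical_iff]
    simp [Fin.forall_fin_two, hlam, hw, h0]
  · simp
  · rw [mul_fin_two, mul_fin_two]
    simp

end Matrix

/-- **Theorem 4.2.** Let `R` be a local ring. A matrix `A ∈ M₂(R)` is strongly
P-clean iff `A ∈ M₂(P(R))`, or `I₂ - A ∈ M₂(P(R))`, or `A` is similar to a
diagonal matrix `diag(λ, μ)` with `λ ∈ P(R)` and `μ ∈ 1 + P(R)`. -/
theorem isStronglyPClean_matrix_iff (R : Type*) [Ring R] [IsLocalRing R]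
    (A : Matrix (Fin 2) (Fin 2) R) :
    IsStronglyPClean A ↔
      ((∀ i j, A i j ∈ primeRadical R) ∨
        (∀ i j, (1 - A) i j ∈ primeRadical R) ∨
        ∃ (lam mu : R) (U : (Matrix (Fin 2) (Fin 2) R)ˣ),
          lam ∈ primeRadical R ∧ (∃ w ∈ primeRadical R, mu = 1 + w) ∧
            (U⁻¹).val * A * U.val = !![lam, 0; 0, mu]) := by
  simp only [← Matrix.mem_primeRadical_iff]
  constructor
  · rintro ⟨E, W, hE, hW, rfl, hEW⟩
    rcases Matrix.eq_zero_or_eq_one_or_isConj_of_isIdempotentElem hE with rfl | rfl | hconj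
    · exact .inl (by simpa using hW)
    · exact .inr (.inl (by simpa using neg_mem_primeRadical hW))
    · exact .inr (.inr (Matrix.exists_conj_add_eq_diag hconj hW hEW))
  · rintro (h | h | ⟨lam, mu, U, hlam, ⟨w, hw, rfl⟩, hU⟩)
    · exact ⟨0, A, .zero, h, (zero_add A).symm, by simp⟩
    · refine ⟨1, A - 1, .one, ?_, (add_sub_cancel 1 A).symm, by simp⟩
      simpa using neg_mem_primeRadical h
    · have hA : U.conjRingEquiv !![lam, 0; 0, 1 + w] = A := by simp [← hU, mul_assoc]
      exact hA ▸ (Matrix.isStronglyPClean_diag hlam hw).map U.conjRingEquiv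
end
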